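/- arXiv:2110.06158 — 2 statements merged into one kernel-verified Lean document; each statement's English description precedes it below -/
import Mathlib

section
/- For all p = 2^n with n ≥ 3, all k from 1 to p, and all i and j from 1 to p distinct from k: j = i + p/2 if and only if σ_{p,k}(i) = σ_{p,k}(j) + p/2, and j = i − p/2 if and only if σ_{p,k}(i) = σ_{p,k}(j) − p/2. -/
/-- The matrix `M₄` (1-indexed). -/
def M4 (i j : ℕ) : ℤ :=
  (([[0,1,2,3],[-1,0,3,-2],[-2,-3,0,1],[-3,2,-1,0]] : List (List ℤ)).getD (i-1) []).getD (j-1) 0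

/-- The matrix `M₄*` (1-indexed). -/
def M4s (i j : ℕ) : ℤ :=
  (([[0,-2,-3,-1],[2,0,1,-3],[3,-1,0,2],[1,3,-2,0]] : List (List ℤ)).getD (i-1) []).getD (j-1) 0

/-- For block-index difference `d`, `blockSC d = (s, c)` means that the corresponding
4×4 block of `M_p` is `s·M₄ + c·I` (and the block of `M_p*` is `s·M₄* − c·I`):
`(1,0)` if `d = 0`; `(-1,4)` if `d ≡ 1 (mod 4)`; `(-1,-4)` if `d ≡ -1 (mod 4)`;
`(1, x+4)` if `d = y·2^x`, `x ≥ 1`, `y ≡ 1 (mod 4)`;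
`(1, -(x+4))` if `d = y·2^x`, `x ≥ 1`, `y ≡ -1 (mod 4)`. -/
def blockSC (d : ℤ) : ℤ × ℤ :=
  if d = 0 then (1, 0)
  else if d % 4 = 1 then (-1, 4)
  else if d % 4 = 3 then (-1, -4)
  else
    let x : ℕ := d.natAbs.factorization 2
    if (d / (2:ℤ)^x) % 4 = 1 then (1, (x:ℤ) + 4) else (1, -((x:ℤ) + 4))

/-- Entry `(i,j)` (1-indexed) of `M_p`, for any `p = 2^n ≥ 4` and `1 ≤ i,j ≤ p`;
the defining block formula depends only on `i` and `j`, not on `p`. -/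
def Ment (i j : ℕ) : ℤ :=
  let d : ℤ := (((j-1)/4 : ℕ) : ℤ) - (((i-1)/4 : ℕ) : ℤ)
  (blockSC d).1 * M4 ((i-1) % 4 + 1) ((j-1) % 4 + 1)
    + (if (i-1) % 4 = (j-1) % 4 then (blockSC d).2 else 0)

/-- Entry `(i,j)` (1-indexed) of `M_p*`. -/
def Ments (i j : ℕ) : ℤ :=
  let d : ℤ := (((j-1)/4 : ℕ) : ℤ) - (((i-1)/4 : ℕ) : ℤ)
  (blockSC d).1 * M4s ((i-1) % 4 + 1) ((j-1) % 4 + 1)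
    + (if (i-1) % 4 = (j-1) % 4 then -(blockSC d).2 else 0)

/-- The `p × p` matrix `M_p`, `p = 2^n`, as a function on 1-based indices
(entries outside the index range `1,…,p` are set to `0`). -/
def Mp (n i j : ℕ) : ℤ :=
  if 1 ≤ i ∧ i ≤ 2^n ∧ 1 ≤ j ∧ j ≤ 2^n then Ment i j else 0

/-- The `p × p` matrix `M_p*`, `p = 2^n`, as a function on 1-based indices. -/
def Mps (n i j : ℕ) : ℤ :=
  if 1 ≤ i ∧ i ≤ 2^n ∧ 1 ≤ j ∧ j ≤ 2^n then Ments i j else 0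

/-- The base mappings `σ_{4,k}` : `sigma4 k i = σ_{4,k}(i)` (value `0` at the
undefined point `i = k`). -/
def sigma4 (k i : ℕ) : ℕ :=
  (([[0,4,2,3],[3,0,4,1],[4,1,0,2],[2,3,1,0]] : List (List ℕ)).getD (k-1) []).getD (i-1) 0

/-- The mappings `σ_{p,k}` for `p = 2^n`: `sigma n k i = σ_{2^n, k}(i)`
(value `0` at the undefined point `i = k`, and junk values for `n < 2`). -/
def sigma : ℕ → ℕ → ℕ → ℕ
  | 0, _, _ => 0
  | 1, _, _ => 0
  | 2, k, i => sigma4 k i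
  | n+3, k, i =>
    let P := 2^(n+2)
    if k ≤ P then
      if i = k + P then i
      else if i ≤ P then sigma (n+2) k i + P
      else sigma (n+2) k (i - P)
    else
      if i = k - P then i
      else if i ≤ P then sigma (n+2) (k - P) i + P
      else sigma (n+2) (k - P) (i - P)

lemma sigma2_base : ∀ k < 4, ∀ i < 4, i ≠ k →
    1 ≤ sigma 2 (k+1) (i+1) ∧ sigma 2 (k+1) (i+1) ≤ 4 ∧ sigma 2 (k+1) (i+1) ≠ k+1 := by decide

lemma sigma2_inj : ∀ k : Fin 4, ∀ i : Fin 4, ∀ j : Fin 4,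
    sigma 2 (k.val+1) (i.val+1) = sigma 2 (k.val+1) (j.val+1) →
    i.val ≠ k.val → j.val ≠ k.val → i.val = j.val := by decide
lemma sigma_props : ∀ n k i, 1 ≤ k → k ≤ 2^(n+2) → 1 ≤ i → i ≤ 2^(n+2) → i ≠ k →
    1 ≤ sigma (n+2) k i ∧ sigma (n+2) k i ≤ 2^(n+2) ∧ sigma (n+2) k i ≠ k := by
  intro n
  induction n with
  | zero =>
    intro k i hk1 hk2 hi1 hi2 hik
    obtain ⟨k', rfl⟩ : ∃ k', k = k'+1 := ⟨k-1, by omega⟩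
    obtain ⟨i', rfl⟩ : ∃ i', i = i'+1 := ⟨i-1, by omega⟩
    exact sigma2_base k' (by omega) i' (by omega) (by omega)
  | succ n ih =>
    intro k i hk1 hk2 hi1 hi2 hik
    have hP : 1 ≤ 2^(n+2) := Nat.one_le_two_pow
    have h2P : 2^(n+1+2) = 2*2^(n+2) := by ring
    simp only [sigma]
    split_ifs with h1 h2 h3 h4 h5
    · omega
    · have := ih k i (by omega) (by omega) (by omega) (by omega) (by omega)
      omega
    · have := ih k (i - 2^(n+2)) (by omega) (by omega) (by omega) (by omega) (by omega)
      omega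
    · omega
    · have := ih (k - 2^(n+2)) i (by omega) (by omega) (by omega) (by omega) (by omega)
      omega
    · have := ih (k - 2^(n+2)) (i - 2^(n+2)) (by omega) (by omega) (by omega) (by omega) (by omega)
      omega
lemma sigma_inj : ∀ n k i j, 1 ≤ k → k ≤ 2^(n+2) → 1 ≤ i → i ≤ 2^(n+2) → 1 ≤ j → j ≤ 2^(n+2) →
    i ≠ k → j ≠ k → sigma (n+2) k i = sigma (n+2) k j → i = j := by
  intro n
  induction n with
  | zero =>
    intro k i j hk1 hk2 hi1 hi2 hj1 hj2 hik hjk heq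
    obtain ⟨k', rfl⟩ : ∃ k', k = k'+1 := ⟨k-1, by omega⟩
    obtain ⟨i', rfl⟩ : ∃ i', i = i'+1 := ⟨i-1, by omega⟩
    obtain ⟨j', rfl⟩ : ∃ j', j = j'+1 := ⟨j-1, by omega⟩
    have h := sigma2_inj ⟨k', by omega⟩ ⟨i', by omega⟩ ⟨j', by omega⟩ heq
      (show i' ≠ k' by omega) (show j' ≠ k' by omega)
    have : i' = j' := h
    omega
  | succ n ih =>
    intro k i j hk1 hk2 hi1 hi2 hj1 hj2 hik hjk heq
    have hP : 1 ≤ 2^(n+2) := Nat.one_le_two_pow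
    have h2P : 2^(n+1+2) = 2*2^(n+2) := by ring
    simp only [sigma] at heq
    split_ifs at heq <;>
    · try have P1 := sigma_props n k i (by omega) (by omega) (by omega) (by omega) (by omega)
      try have P2 := sigma_props n k j (by omega) (by omega) (by omega) (by omega) (by omega)
      try have P3 := sigma_props n k (i - 2^(n+2)) (by omega) (by omega) (by omega) (by omega) (by omega)
      try have P4 := sigma_props n k (j - 2^(n+2)) (by omega) (by omega) (by omega) (by omega) (by omega)
      try have P5 := sigma_props n (k - 2^(n+2)) i (by omega) (by omega) (by omega) (by omega) (by omega)
      try have P6 := sigma_props n (k - 2^(n+2)) j (by omega) (by omega) (by omega) (by omega) (by omega)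
      try have P7 := sigma_props n (k - 2^(n+2)) (i - 2^(n+2)) (by omega) (by omega) (by omega) (by omega) (by omega)
      try have P8 := sigma_props n (k - 2^(n+2)) (j - 2^(n+2)) (by omega) (by omega) (by omega) (by omega) (by omega)
      first
      | omega
      | (have := ih k i j (by omega) (by omega) (by omega) (by omega) (by omega) (by omega)
          (by omega) (by omega) (by omega); omega)
      | (have := ih k (i - 2^(n+2)) (j - 2^(n+2)) (by omega) (by omega) (by omega) (by omega)
          (by omega) (by omega) (by omega) (by omega) (by omega); omega)
      | (have := ih (k - 2^(n+2)) i j (by omega) (by omega) (by omega) (by omega) (by omega)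
          (by omega) (by omega) (by omega) (by omega); omega)
      | (have := ih (k - 2^(n+2)) (i - 2^(n+2)) (j - 2^(n+2)) (by omega) (by omega) (by omega)
          (by omega) (by omega) (by omega) (by omega) (by omega) (by omega); omega)
lemma sigma_key (n k i j : ℕ) (hk1 : 1 ≤ k) (hk2 : k ≤ 2^(n+3)) (hi1 : 1 ≤ i) (hi2 : i ≤ 2^(n+3))
    (hj1 : 1 ≤ j) (hj2 : j ≤ 2^(n+3)) (hik : i ≠ k) (hjk : j ≠ k) :
    j = i + 2^(n+2) ↔ sigma (n+3) k i = sigma (n+3) k j + 2^(n+2) := by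
  have hP : 1 ≤ 2^(n+2) := Nat.one_le_two_pow
  have h2P : 2^(n+3) = 2*2^(n+2) := by ring
  simp only [sigma]
  split_ifs <;>
  · try have P1 := sigma_props n k i (by omega) (by omega) (by omega) (by omega) (by omega)
    try have P2 := sigma_props n k j (by omega) (by omega) (by omega) (by omega) (by omega)
    try have P3 := sigma_props n k (i - 2^(n+2)) (by omega) (by omega) (by omega) (by omega) (by omega)
    try have P4 := sigma_props n k (j - 2^(n+2)) (by omega) (by omega) (by omega) (by omega) (by omega)
    try have P5 := sigma_props n (k - 2^(n+2)) i (by omega) (by omega) (by omega) (by omega) (by omega)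
    try have P6 := sigma_props n (k - 2^(n+2)) j (by omega) (by omega) (by omega) (by omega) (by omega)
    try have P7 := sigma_props n (k - 2^(n+2)) (i - 2^(n+2)) (by omega) (by omega) (by omega) (by omega) (by omega)
    try have P8 := sigma_props n (k - 2^(n+2)) (j - 2^(n+2)) (by omega) (by omega) (by omega) (by omega) (by omega)
    first
    | omega
    | (constructor
       · intro h
         rw [show j - 2^(n+2) = i from by omega]
       · intro h
         have := sigma_inj n k i (j - 2^(n+2)) (by omega) (by omega) (by omega) (by omega)
           (by omega) (by omega) (by omega) (by omega) (by omega)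
         omega)
    | (constructor
       · intro h
         rw [show j - 2^(n+2) = i from by omega]
       · intro h
         have := sigma_inj n (k - 2^(n+2)) i (j - 2^(n+2)) (by omega) (by omega) (by omega)
           (by omega) (by omega) (by omega) (by omega) (by omega) (by omega)
         omega)

/-- For all `p = 2^n` with `n ≥ 3`, all `k` from 1 to `p`, and all `i, j`
from 1 to `p` distinct from `k`: `j = i + p/2 ↔ σ_{p,k}(i) = σ_{p,k}(j) + p/2`, and
`j = i − p/2 ↔ σ_{p,k}(i) = σ_{p,k}(j) − p/2`. -/
theorem stmt8 (n p : ℕ) (hn : 3 ≤ n) (hp : p = 2^n)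
    (k : ℕ) (hk1 : 1 ≤ k) (hk2 : k ≤ p)
    (i j : ℕ) (hi1 : 1 ≤ i) (hi2 : i ≤ p) (hj1 : 1 ≤ j) (hj2 : j ≤ p)
    (hik : i ≠ k) (hjk : j ≠ k) :
    (j = i + p/2 ↔ sigma n k i = sigma n k j + p/2) ∧
    (j + p/2 = i ↔ sigma n k i + p/2 = sigma n k j) := by
  obtain ⟨m, rfl⟩ : ∃ m, n = m + 3 := ⟨n - 3, by omega⟩
  subst hp
  have hhalf : 2^(m+3)/2 = 2^(m+2) := by
    rw [show (2:ℕ)^(m+3) = 2^(m+2)*2 from by ring, Nat.mul_div_cancel _ (by norm_num)]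
  rw [hhalf]
  constructor
  · exact sigma_key m k i j hk1 hk2 hi1 hi2 hj1 hj2 hik hjk
  · have h := sigma_key m k j i hk1 hk2 hj1 hj2 hi1 hi2 hjk hik
    constructor
    · intro hh; exact (h.mp hh.symm).symm
    · intro hh; exact (h.mpr hh.symm).symm
end

section
/- For all p = 2^n with n ≥ 3 and all distinct i and j from 1 to p, M_p[i,j] = ε·M_p^*[i, σ_{p,i}(j)] = ε·M_p^*[σ_{p,j}(i), j], where ε = −1 if |j−i| = p/2 and ε = +1 otherwise. -/
/-!
Write a block difference as `d = 2^x q` with `q` odd. The sign in front of `M₄` in a block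
only depends on the parity of `d`, and the multiple `±(x+4)` of `I` changes sign under
`d ↦ -d`, while for `0 < |d| < 2^m` it changes sign under `d ↦ d + 2^m` exactly when
`|d| = 2^(m-1)`. Hence the diagonal quadrants of `M_{2p}` are copies of `M_p`, and the
off-diagonal ones are copies in which the entries `(a, b)` with `|b - a| = p/2` change sign;
the same holds for `M_{2p}^*`. The recursion defining `σ_{2p,k}` follows the same quadrant
structure and preserves the distance `p/2` to `k`, so the first identity propagates from `p` to
`2p`, starting from `p = 8` by computation. The second identity follows from the first since
`M_p` and `M_p^*` are antisymmetric.
-/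

lemma blockSC_fst (d : ℤ) : (blockSC d).1 = if 2 ∣ d then 1 else -1 := by
  simp only [blockSC]
  split_ifs <;> omega

lemma factorization_natAbs_two_pow_mul (x : ℕ) {q : ℤ} (hq : q % 2 = 1) :
    (2 ^ x * q).natAbs.factorization 2 = x := by
  have hq' : ¬ 2 ∣ q.natAbs := by omega
  rw [Int.natAbs_mul, Int.natAbs_pow, Nat.factorization_mul (by simp) (by omega)]
  simp [Nat.factorization_eq_zero_of_not_dvd hq', Nat.Prime.factorization_pow Nat.prime_two]

lemma exists_eq_two_pow_mul_odd {d : ℤ} (hd : d ≠ 0) :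
    ∃ (x : ℕ) (q : ℤ), d = 2 ^ x * q ∧ q % 2 = 1 := by
  obtain ⟨q, hdq, hq⟩ :=
    (Int.finiteMultiplicity_iff (a := 2).mpr ⟨by norm_num, hd⟩).exists_eq_pow_mul_and_not_dvd
  exact ⟨_, q, hdq, by omega⟩

lemma blockSC_snd_two_pow_mul (x : ℕ) {q : ℤ} (hq : q % 2 = 1) :
    (blockSC (2 ^ x * q)).2 = (if q % 4 = 1 then 1 else -1) * ((x : ℤ) + 4) := by
  rcases Nat.eq_zero_or_pos x with rfl | hx
  · simp only [blockSC]
    split_ifs <;> omega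
  · have hdvd : (2 : ℤ) ∣ 2 ^ x * q := (dvd_pow_self 2 hx.ne').mul_right q
    have hne : (2 : ℤ) ^ x * q ≠ 0 := mul_ne_zero (by positivity) (by omega)
    unfold blockSC
    rw [if_neg hne, if_neg (by omega), if_neg (by omega)]
    simp only [factorization_natAbs_two_pow_mul x hq,
      Int.mul_ediv_cancel_left q (by positivity : (2 : ℤ) ^ x ≠ 0)]
    split_ifs <;> simp

lemma blockSC_snd_neg (d : ℤ) : (blockSC (-d)).2 = -(blockSC d).2 := by
  rcases eq_or_ne d 0 with rfl | hd
  · simp [blockSC]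
  obtain ⟨x, q, rfl, hq⟩ := exists_eq_two_pow_mul_odd hd
  rw [← mul_neg, blockSC_snd_two_pow_mul x hq, blockSC_snd_two_pow_mul x (by omega)]
  split_ifs <;> omega

lemma blockSC_neg (d : ℤ) : blockSC (-d) = ((blockSC d).1, -(blockSC d).2) :=
  Prod.ext (by simp only [blockSC_fst, dvd_neg]) (blockSC_snd_neg d)

lemma blockSC_fst_add_two_pow {m : ℕ} (hm : 1 ≤ m) (d : ℤ) :
    (blockSC (d + 2 ^ m)).1 = (blockSC d).1 := by
  have h2 : (2 : ℤ) ∣ 2 ^ m := dvd_pow_self 2 (by omega)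
  simp only [blockSC_fst, dvd_add_left h2]

lemma blockSC_snd_add_two_pow {m : ℕ} {d : ℤ} (hd0 : d ≠ 0) (hd : d.natAbs < 2 ^ m) :
    (blockSC (d + 2 ^ m)).2 = (if d.natAbs = 2 ^ (m - 1) then -1 else 1) * (blockSC d).2 := by
  obtain ⟨x, q, rfl, hq⟩ := exists_eq_two_pow_mul_odd hd0
  have habs : ((2 : ℤ) ^ x * q).natAbs = 2 ^ x * q.natAbs := by
    rw [Int.natAbs_mul, Int.natAbs_pow]; rfl
  have hpos : 0 < 2 ^ x := by positivity
  rw [habs] at hd ⊢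
  have hxm : x < m := by
    by_contra! h
    have := Nat.pow_le_pow_right two_pos h
    have := Nat.le_mul_of_pos_right (2 ^ x) (show 0 < q.natAbs by omega)
    omega
  obtain ⟨k, rfl⟩ : ∃ k, m = x + (k + 1) := ⟨m - x - 1, by omega⟩
  rw [pow_add] at hd
  have hqk : q.natAbs < 2 ^ (k + 1) := Nat.lt_of_mul_lt_mul_left hd
  have hsum : (2 : ℤ) ^ x * q + 2 ^ (x + (k + 1)) = 2 ^ x * (q + 2 ^ (k + 1)) := by ring
  have hk : (2 : ℤ) ^ (k + 1) % 2 = 0 := by simp [pow_succ]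
  rw [hsum, blockSC_snd_two_pow_mul x hq, blockSC_snd_two_pow_mul x (by omega),
    show x + (k + 1) - 1 = x + k by omega,
    show (2 : ℕ) ^ (x + k) = 2 ^ x * 2 ^ k from pow_add 2 x k]
  rcases Nat.eq_zero_or_pos k with rfl | hk0
  · -- `d = ± 2 ^ x`: adding `2 ^ (x + 1)` swaps the two signs
    rcases Int.natAbs_eq_iff.mp (show q.natAbs = 1 by omega) with rfl | rfl <;> norm_num
  · have h4 : (2 : ℤ) ^ (k + 1) = 4 * 2 ^ (k - 1) := by
      rw [show k + 1 = 2 + (k - 1) by omega, pow_add]; norm_num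
    have hne : q.natAbs ≠ 2 ^ k := by
      rw [show k = 1 + (k - 1) by omega, pow_add]; omega
    rw [if_neg (fun h => hne (Nat.eq_of_mul_eq_mul_left hpos h)),
      show (q + 2 ^ (k + 1)) % 4 = q % 4 by omega, one_mul]

def blockDiff (i j : ℕ) : ℤ := (((j - 1) / 4 : ℕ) : ℤ) - (((i - 1) / 4 : ℕ) : ℤ)

def blockEntry (g : ℕ → ℕ → ℤ) (e : ℤ) (i j : ℕ) : ℤ :=
  (blockSC (blockDiff i j)).1 * g ((i - 1) % 4 + 1) ((j - 1) % 4 + 1)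
    + (if (i - 1) % 4 = (j - 1) % 4 then e * (blockSC (blockDiff i j)).2 else 0)

lemma Ment_eq_blockEntry : Ment = blockEntry M4 1 := by
  ext i j; simp [Ment, blockEntry, blockDiff]

lemma Ments_eq_blockEntry : Ments = blockEntry M4s (-1) := by
  ext i j; simp [Ments, blockEntry, blockDiff]

lemma M4_diag : ∀ r < 4, M4 (r + 1) (r + 1) = 0 := by decide
lemma M4s_diag : ∀ r < 4, M4s (r + 1) (r + 1) = 0 := by decide
lemma M4_antisymm : ∀ r < 4, ∀ s < 4, M4 (s + 1) (r + 1) = -M4 (r + 1) (s + 1) := by decide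
lemma M4s_antisymm : ∀ r < 4, ∀ s < 4, M4s (s + 1) (r + 1) = -M4s (r + 1) (s + 1) := by decide

/-- The sign `ε` of the theorem for `p = 2 ^ n`. -/
def antipodalSign (n i j : ℕ) : ℤ := if ((j : ℤ) - i).natAbs = 2 ^ (n - 1) then -1 else 1

lemma antipodalSign_mul_self (n i j : ℕ) : antipodalSign n i j * antipodalSign n i j = 1 := by
  unfold antipodalSign; split_ifs <;> norm_num

lemma antipodalSign_comm (n i j : ℕ) : antipodalSign n j i = antipodalSign n i j := by
  simp only [antipodalSign, show ((i : ℤ) - j).natAbs = ((j : ℤ) - i).natAbs by omega]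

section blockEntry

variable {g : ℕ → ℕ → ℤ} {e : ℤ}

lemma blockEntry_of_mod_eq (hg : ∀ r < 4, g (r + 1) (r + 1) = 0) {a b : ℕ}
    (h : (a - 1) % 4 = (b - 1) % 4) : blockEntry g e a b = e * (blockSC (blockDiff a b)).2 := by
  simp only [blockEntry, h, hg _ (Nat.mod_lt _ four_pos), mul_zero, zero_add, if_true]

lemma blockEntry_swap (hg : ∀ r < 4, ∀ s < 4, g (s + 1) (r + 1) = -g (r + 1) (s + 1))
    (a b : ℕ) : blockEntry g e b a = -blockEntry g e a b := by
  have hd : blockDiff b a = -blockDiff a b := (neg_sub _ _).symm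
  rw [blockEntry, blockEntry, hd, blockSC_neg,
    hg _ (Nat.mod_lt _ four_pos) _ (Nat.mod_lt _ four_pos)]
  simp only [eq_comm (a := (b - 1) % 4)]
  split_ifs <;> ring

lemma blockEntry_add_add_of_four_dvd {a b c : ℕ} (ha : 1 ≤ a) (hb : 1 ≤ b) (hc : 4 ∣ c) :
    blockEntry g e (a + c) (b + c) = blockEntry g e a b := by
  obtain ⟨t, rfl⟩ := hc
  have hd : blockDiff (a + 4 * t) (b + 4 * t) = blockDiff a b := by
    simp only [blockDiff, show ∀ x, 1 ≤ x → (x + 4 * t - 1) / 4 = (x - 1) / 4 + t by omega,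
      ha, hb]
    push_cast; ring
  simp only [blockEntry, hd, ha, hb,
    show ∀ x, 1 ≤ x → (x + 4 * t - 1) % 4 = (x - 1) % 4 by omega]

lemma blockEntry_add_two_pow_right (hg : ∀ r < 4, g (r + 1) (r + 1) = 0) {n : ℕ} (hn : 3 ≤ n)
    {a b : ℕ} (ha1 : 1 ≤ a) (ha2 : a ≤ 2 ^ n) (hb1 : 1 ≤ b) (hb2 : b ≤ 2 ^ n) (hab : a ≠ b) :
    blockEntry g e a (b + 2 ^ n) = antipodalSign n a b * blockEntry g e a b := by
  obtain ⟨m, rfl⟩ : ∃ m, n = m + 3 := ⟨n - 3, by omega⟩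
  have hpow : (2 : ℕ) ^ (m + 3) = 4 * 2 ^ (m + 1) := by ring
  have hpow' : (2 : ℕ) ^ (m + 2) = 2 * 2 ^ (m + 1) := by ring
  have hmod : (b + 2 ^ (m + 3) - 1) % 4 = (b - 1) % 4 := by omega
  have hd : blockDiff a (b + 2 ^ (m + 3)) = blockDiff a b + 2 ^ (m + 1) := by
    simp only [blockDiff, show (b + 2 ^ (m + 3) - 1) / 4 = (b - 1) / 4 + 2 ^ (m + 1) by omega]
    push_cast; ring
  unfold antipodalSign
  rw [show m + 3 - 1 = m + 2 by rfl]
  by_cases hr : (a - 1) % 4 = (b - 1) % 4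
  · have hiff :
        (blockDiff a b).natAbs = 2 ^ (m + 1 - 1) ↔ ((b : ℤ) - a).natAbs = 2 ^ (m + 2) := by
      simp only [blockDiff, Nat.add_sub_cancel]; omega
    rw [blockEntry_of_mod_eq hg (hr.trans hmod.symm), blockEntry_of_mod_eq hg hr, hd,
      blockSC_snd_add_two_pow (by simp only [blockDiff]; omega) (by simp only [blockDiff]; omega)]
    simp only [hiff]
    ring
  · rw [if_neg (by omega), one_mul]
    simp only [blockEntry, hd, hmod, blockSC_fst_add_two_pow (by omega : 1 ≤ m + 1), if_neg hr]

lemma blockEntry_add_two_pow_left (hg : ∀ r < 4, g (r + 1) (r + 1) = 0)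
    (hg' : ∀ r < 4, ∀ s < 4, g (s + 1) (r + 1) = -g (r + 1) (s + 1)) {n : ℕ} (hn : 3 ≤ n)
    {a b : ℕ} (ha1 : 1 ≤ a) (ha2 : a ≤ 2 ^ n) (hb1 : 1 ≤ b) (hb2 : b ≤ 2 ^ n) (hab : a ≠ b) :
    blockEntry g e (a + 2 ^ n) b = antipodalSign n a b * blockEntry g e a b := by
  rw [blockEntry_swap hg', blockEntry_add_two_pow_right hg hn hb1 hb2 ha1 ha2 hab.symm,
    blockEntry_swap hg' b a, antipodalSign_comm]
  ring

end blockEntry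

lemma sigma_succ {n : ℕ} (hn : 2 ≤ n) (k i : ℕ) :
    sigma (n + 1) k i =
      if k ≤ 2 ^ n then
        if i = k + 2 ^ n then i
        else if i ≤ 2 ^ n then sigma n k i + 2 ^ n
        else sigma n k (i - 2 ^ n)
      else
        if i = k - 2 ^ n then i
        else if i ≤ 2 ^ n then sigma n (k - 2 ^ n) i + 2 ^ n
        else sigma n (k - 2 ^ n) (i - 2 ^ n) := by
  obtain ⟨m, rfl⟩ : ∃ m, n = m + 2 := ⟨n - 2, by omega⟩
  rfl

lemma sigma_mem {n : ℕ} (hn : 2 ≤ n) {k i : ℕ} (hk1 : 1 ≤ k) (hk2 : k ≤ 2 ^ n) (hi1 : 1 ≤ i)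
    (hi2 : i ≤ 2 ^ n) (hik : i ≠ k) :
    1 ≤ sigma n k i ∧ sigma n k i ≤ 2 ^ n ∧ sigma n k i ≠ k := by
  induction n, hn using Nat.le_induction generalizing k i with
  | base =>
    simp only [Nat.reducePow] at hk2 hi2
    interval_cases k <;> interval_cases i <;> simp_all <;> decide
  | succ n hn ih =>
    rw [pow_succ] at hk2 hi2
    rw [sigma_succ hn]
    split_ifs
    · omega
    · have := ih (k := k) (i := i) (by omega) (by omega) (by omega) (by omega) (by omega)
      omega
    · have := ih (k := k) (i := i - 2 ^ n) (by omega) (by omega) (by omega) (by omega) (by omega)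
      omega
    · omega
    · have := ih (k := k - 2 ^ n) (i := i) (by omega) (by omega) (by omega) (by omega) (by omega)
      omega
    · have := ih (k := k - 2 ^ n) (i := i - 2 ^ n) (by omega) (by omega) (by omega) (by omega)
        (by omega)
      omega

lemma antipodalSign_sigma {n : ℕ} (hn : 3 ≤ n) {k i : ℕ} (hk1 : 1 ≤ k) (hk2 : k ≤ 2 ^ n)
    (hi1 : 1 ≤ i) (hi2 : i ≤ 2 ^ n) (hik : i ≠ k) :
    antipodalSign n k (sigma n k i) = antipodalSign n k i := by
  obtain ⟨m, rfl⟩ : ∃ m, n = m + 1 := ⟨n - 1, by omega⟩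
  have hm : 2 ≤ m := by omega
  rw [pow_succ] at hk2 hi2
  unfold antipodalSign
  rw [Nat.add_sub_cancel, sigma_succ hm]
  congr 1
  apply propext
  split_ifs
  · omega
  · have := sigma_mem hm (k := k) (i := i) (by omega) (by omega) (by omega) (by omega) (by omega)
    omega
  · have := sigma_mem hm (k := k) (i := i - 2 ^ m) (by omega) (by omega) (by omega) (by omega)
      (by omega)
    omega
  · omega
  · have := sigma_mem hm (k := k - 2 ^ m) (i := i) (by omega) (by omega) (by omega) (by omega)
      (by omega)
    omega
  · have := sigma_mem hm (k := k - 2 ^ m) (i := i - 2 ^ m) (by omega) (by omega) (by omega)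
      (by omega) (by omega)
    omega

lemma Ment_eq_neg_Ments_of_mod_eq {a b : ℕ} (h : (a - 1) % 4 = (b - 1) % 4) :
    Ment a b = -Ments a b := by
  rw [Ment_eq_blockEntry, Ments_eq_blockEntry, blockEntry_of_mod_eq M4_diag h,
    blockEntry_of_mod_eq M4s_diag h]
  ring

lemma Ment_add_two_pow_right {n : ℕ} (hn : 3 ≤ n) {a b : ℕ} (ha1 : 1 ≤ a) (ha2 : a ≤ 2 ^ n)
    (hb1 : 1 ≤ b) (hb2 : b ≤ 2 ^ n) (hab : a ≠ b) :
    Ment a (b + 2 ^ n) = antipodalSign n a b * Ment a b := by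
  rw [Ment_eq_blockEntry]; exact blockEntry_add_two_pow_right M4_diag hn ha1 ha2 hb1 hb2 hab

lemma Ments_add_two_pow_right {n : ℕ} (hn : 3 ≤ n) {a b : ℕ} (ha1 : 1 ≤ a) (ha2 : a ≤ 2 ^ n)
    (hb1 : 1 ≤ b) (hb2 : b ≤ 2 ^ n) (hab : a ≠ b) :
    Ments a (b + 2 ^ n) = antipodalSign n a b * Ments a b := by
  rw [Ments_eq_blockEntry]; exact blockEntry_add_two_pow_right M4s_diag hn ha1 ha2 hb1 hb2 hab

lemma Ment_add_two_pow_left {n : ℕ} (hn : 3 ≤ n) {a b : ℕ} (ha1 : 1 ≤ a) (ha2 : a ≤ 2 ^ n)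
    (hb1 : 1 ≤ b) (hb2 : b ≤ 2 ^ n) (hab : a ≠ b) :
    Ment (a + 2 ^ n) b = antipodalSign n a b * Ment a b := by
  rw [Ment_eq_blockEntry]
  exact blockEntry_add_two_pow_left M4_diag M4_antisymm hn ha1 ha2 hb1 hb2 hab

lemma Ments_add_two_pow_left {n : ℕ} (hn : 3 ≤ n) {a b : ℕ} (ha1 : 1 ≤ a) (ha2 : a ≤ 2 ^ n)
    (hb1 : 1 ≤ b) (hb2 : b ≤ 2 ^ n) (hab : a ≠ b) :
    Ments (a + 2 ^ n) b = antipodalSign n a b * Ments a b := by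
  rw [Ments_eq_blockEntry]
  exact blockEntry_add_two_pow_left M4s_diag M4s_antisymm hn ha1 ha2 hb1 hb2 hab

lemma Ment_add_add_of_four_dvd {a b c : ℕ} (ha : 1 ≤ a) (hb : 1 ≤ b) (hc : 4 ∣ c) :
    Ment (a + c) (b + c) = Ment a b := by
  rw [Ment_eq_blockEntry]; exact blockEntry_add_add_of_four_dvd ha hb hc

lemma Ments_add_add_of_four_dvd {a b c : ℕ} (ha : 1 ≤ a) (hb : 1 ≤ b) (hc : 4 ∣ c) :
    Ments (a + c) (b + c) = Ments a b := by
  rw [Ments_eq_blockEntry]; exact blockEntry_add_add_of_four_dvd ha hb hc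

lemma Ment_swap (a b : ℕ) : Ment b a = -Ment a b := by
  rw [Ment_eq_blockEntry]; exact blockEntry_swap M4_antisymm a b

lemma Ments_swap (a b : ℕ) : Ments b a = -Ments a b := by
  rw [Ments_eq_blockEntry]; exact blockEntry_swap M4s_antisymm a b

def SigmaRowIdentity (n : ℕ) : Prop :=
  ∀ i j, 1 ≤ i → i ≤ 2 ^ n → 1 ≤ j → j ≤ 2 ^ n → i ≠ j →
    Ment i j = antipodalSign n i j * Ments i (sigma n i j)

lemma sigmaRowIdentity_three : SigmaRowIdentity 3 := by
  have h : ∀ i < 9, ∀ j < 9, 1 ≤ i → 1 ≤ j → i ≠ j →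
      Ment i j = antipodalSign 3 i j * Ments i (sigma 3 i j) := by
    unfold antipodalSign; decide
  intro i j hi1 hi2 hj1 hj2 hij
  exact h i (by omega) j (by omega) hi1 hj1 hij

section succ

variable {n : ℕ} (hn : 3 ≤ n) (ih : SigmaRowIdentity n)
include hn ih

lemma sigmaRowIdentity_succ_of_le {i j : ℕ} (hi1 : 1 ≤ i) (hi2 : i ≤ 2 ^ n) (hj1 : 1 ≤ j)
    (hj2 : j ≤ 2 ^ (n + 1)) (hij : i ≠ j) :
    Ment i j = antipodalSign (n + 1) i j * Ments i (sigma (n + 1) i j) := by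
  have h4 : 4 ∣ 2 ^ n := Nat.pow_dvd_pow 2 (show 2 ≤ n by omega)
  rw [pow_succ] at hj2
  rw [sigma_succ (by omega), if_pos hi2]
  split_ifs with hanti hj
  · rw [hanti, antipodalSign, Nat.add_sub_cancel, if_pos (by omega)]
    rw [← hanti, Ment_eq_neg_Ments_of_mod_eq (by omega), neg_one_mul]
  · obtain ⟨hs1, hs2, hsi⟩ := sigma_mem (by omega) hi1 hi2 hj1 hj (Ne.symm hij)
    rw [antipodalSign, Nat.add_sub_cancel, if_neg (by omega), one_mul,
      Ments_add_two_pow_right hn hi1 hi2 hs1 hs2 hsi.symm,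
      antipodalSign_sigma hn hi1 hi2 hj1 hj (Ne.symm hij), ih i j hi1 hi2 hj1 hj hij]
  · obtain ⟨b, rfl⟩ : ∃ b, j = b + 2 ^ n := ⟨j - 2 ^ n, by omega⟩
    have hib : i ≠ b := by omega
    rw [antipodalSign, Nat.add_sub_cancel, if_neg (by omega), one_mul, Nat.add_sub_cancel,
      Ment_add_two_pow_right hn hi1 hi2 (by omega) (by omega) hib,
      ih i b hi1 hi2 (by omega) (by omega) hib, ← mul_assoc, antipodalSign_mul_self, one_mul]

lemma sigmaRowIdentity_succ_add_two_pow {a j : ℕ} (ha1 : 1 ≤ a) (ha2 : a ≤ 2 ^ n)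
    (hj1 : 1 ≤ j) (hj2 : j ≤ 2 ^ (n + 1)) (haj : a + 2 ^ n ≠ j) :
    Ment (a + 2 ^ n) j =
      antipodalSign (n + 1) (a + 2 ^ n) j * Ments (a + 2 ^ n) (sigma (n + 1) (a + 2 ^ n) j) := by
  have h4 : 4 ∣ 2 ^ n := Nat.pow_dvd_pow 2 (show 2 ≤ n by omega)
  rw [pow_succ] at hj2
  rw [sigma_succ (by omega), if_neg (by omega), Nat.add_sub_cancel]
  split_ifs with hanti hj
  · rw [hanti, antipodalSign, Nat.add_sub_cancel, if_pos (by omega)]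
    rw [Ment_eq_neg_Ments_of_mod_eq (by omega), neg_one_mul]
  · obtain ⟨hs1, hs2, hsa⟩ := sigma_mem (by omega) ha1 ha2 hj1 hj hanti
    rw [antipodalSign, Nat.add_sub_cancel, if_neg (by omega), one_mul,
      Ments_add_add_of_four_dvd ha1 hs1 h4,
      Ment_add_two_pow_left hn ha1 ha2 hj1 hj (Ne.symm hanti),
      ih a j ha1 ha2 hj1 hj (Ne.symm hanti), ← mul_assoc, antipodalSign_mul_self, one_mul]
  · obtain ⟨b, rfl⟩ : ∃ b, j = b + 2 ^ n := ⟨j - 2 ^ n, by omega⟩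
    have hab : a ≠ b := by omega
    obtain ⟨hs1, hs2, hsa⟩ := sigma_mem (by omega) ha1 ha2 (by omega) (by omega) hab.symm
    rw [antipodalSign, Nat.add_sub_cancel, if_neg (by omega), one_mul, Nat.add_sub_cancel,
      Ment_add_add_of_four_dvd ha1 (by omega) h4, ih a b ha1 ha2 (by omega) (by omega) hab,
      Ments_add_two_pow_left hn ha1 ha2 hs1 hs2 hsa.symm,
      antipodalSign_sigma hn ha1 ha2 (by omega) (by omega) hab.symm]

lemma sigmaRowIdentity_succ : SigmaRowIdentity (n + 1) := by
  intro i j hi1 hi2 hj1 hj2 hij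
  by_cases hi : i ≤ 2 ^ n
  · exact sigmaRowIdentity_succ_of_le hn ih hi1 hi hj1 hj2 hij
  · obtain ⟨a, rfl⟩ : ∃ a, i = a + 2 ^ n := ⟨i - 2 ^ n, by omega⟩
    rw [pow_succ] at hi2
    exact sigmaRowIdentity_succ_add_two_pow hn ih (by omega) (by omega) hj1 (by omega) hij

end succ

lemma sigmaRowIdentity {n : ℕ} (hn : 3 ≤ n) : SigmaRowIdentity n := by
  induction n, hn using Nat.le_induction with
  | base => exact sigmaRowIdentity_three
  | succ n hn ih => exact sigmaRowIdentity_succ hn ih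

/-- For all `p = 2^n` with `n ≥ 3` and all distinct `i, j` from 1 to `p`,
`M_p[i,j] = ε·M_p*[i, σ_{p,i}(j)] = ε·M_p*[σ_{p,j}(i), j]`, where `ε = −1` if
`|j−i| = p/2` and `ε = +1` otherwise. -/
theorem stmt10 (n p : ℕ) (hn : 3 ≤ n) (hp : p = 2^n)
    (i j : ℕ) (hi1 : 1 ≤ i) (hi2 : i ≤ p) (hj1 : 1 ≤ j) (hj2 : j ≤ p) (hij : i ≠ j) :
    Mp n i j = (if ((j:ℤ) - (i:ℤ)).natAbs = p/2 then -1 else 1) * Mps n i (sigma n i j) ∧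
    Mp n i j = (if ((j:ℤ) - (i:ℤ)).natAbs = p/2 then -1 else 1) * Mps n (sigma n j i) j := by
  subst hp
  have hsign : (if ((j : ℤ) - i).natAbs = 2 ^ n / 2 then -1 else 1) = antipodalSign n i j := by
    have h := Nat.pow_div (show 1 ≤ n by omega) two_pos
    rw [pow_one] at h
    rw [antipodalSign, h]
  obtain ⟨hs1, hs2, -⟩ := sigma_mem (by omega) hi1 hi2 hj1 hj2 hij.symm
  obtain ⟨ht1, ht2, -⟩ := sigma_mem (by omega) hj1 hj2 hi1 hi2 hij
  simp only [Mp, Mps, hsign, hi1, hi2, hj1, hj2, hs1, hs2, ht1, ht2, and_self, if_true]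
  refine ⟨sigmaRowIdentity hn i j hi1 hi2 hj1 hj2 hij, ?_⟩
  rw [Ment_swap j i, sigmaRowIdentity hn j i hj1 hj2 hi1 hi2 hij.symm, Ments_swap j,
    antipodalSign_comm]
  ring
end
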